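/- arXiv:1209.4444 — 2 statements merged into one kernel-verified Lean document; each statement's English description precedes it below -/
import Mathlib

section
/- Let f : ℝ → ℝ be differentiable and concave on [x_i, x_{i+1}] with 0 ≤ x_i ≤ x_{i+1}. Let p_i, p_{i+1} ≥ 0 with p_i + p_{i+1} > 0, x̄ = (p_i x_i + p_{i+1} x_{i+1})/(p_i+p_{i+1}), and Δx = x_{i+1}−x_i. Then p_i (f(x̄) − f(x_i)) − p_{i+1} (f(x_{i+1}) − f(x̄)) ≤ (p_i p_{i+1}/(p_i+p_{i+1})) · Δx · (f'(x_i) − f'(x_{i+1})). -/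
/-!
Concavity puts the graph of `f` below its tangent lines at `x₁` and at `x₂`. Evaluating both
tangent-line bounds at the weighted mean `m`, where `m - x₁ = q Δx / (p + q)` and
`x₂ - m = p Δx / (p + q)`, and weighting them by `p` and `q` gives the estimate.
-/

open Set

lemma mul_add_mul_div_add_mem_Icc {𝕜 : Type*} [Field 𝕜] [LinearOrder 𝕜] [IsStrictOrderedRing 𝕜]
    {a b p q : 𝕜} (hab : a ≤ b) (hp : 0 ≤ p) (hq : 0 ≤ q) (hpq : 0 < p + q) :
    (p * a + q * b) / (p + q) ∈ Icc a b := by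
  constructor
  · rw [le_div_iff₀ hpq]; nlinarith
  · rw [div_le_iff₀ hpq]; nlinarith

lemma ConcaveOn.le_add_mul_sub_of_hasDerivAt {S : Set ℝ} {f : ℝ → ℝ} {f' x y : ℝ}
    (hf : ConcaveOn ℝ S f) (hx : x ∈ S) (hy : y ∈ S) (hf' : HasDerivAt f f' x) :
    f y ≤ f x + f' * (y - x) := by
  rcases lt_trichotomy x y with hxy | rfl | hyx
  · have hslope := hf.slope_le_of_hasDerivAt hx hy hxy hf'
    rw [slope_def_field, div_le_iff₀ (sub_pos.2 hxy)] at hslope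
    linarith
  · simp
  · have hslope := hf.le_slope_of_hasDerivAt hy hx hyx hf'
    rw [slope_def_field, le_div_iff₀ (sub_pos.2 hyx)] at hslope
    linarith

theorem merge_error_deriv_bound_general (f f' : ℝ → ℝ)
    (x₁ x₂ : ℝ) (hle : x₁ ≤ x₂)
    (hconc : ConcaveOn ℝ (Set.Icc x₁ x₂) f)
    (hderiv : ∀ x ∈ Set.Icc x₁ x₂, HasDerivAt f (f' x) x)
    (p q : ℝ) (hp : 0 ≤ p) (hq : 0 ≤ q) (hpq : 0 < p + q) :
    p * (f ((p * x₁ + q * x₂) / (p + q)) - f x₁) -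
      q * (f x₂ - f ((p * x₁ + q * x₂) / (p + q))) ≤
    (p * q / (p + q)) * (x₂ - x₁) * (f' x₁ - f' x₂) := by
  set m := (p * x₁ + q * x₂) / (p + q) with hm
  have hm_mem : m ∈ Icc x₁ x₂ := mul_add_mul_div_add_mem_Icc hle hp hq hpq
  have hx₁ : x₁ ∈ Icc x₁ x₂ := left_mem_Icc.2 hle
  have hx₂ : x₂ ∈ Icc x₁ x₂ := right_mem_Icc.2 hle
  have tangent₁ := hconc.le_add_mul_sub_of_hasDerivAt hx₁ hm_mem (hderiv x₁ hx₁)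
  have tangent₂ := hconc.le_add_mul_sub_of_hasDerivAt hx₂ hm_mem (hderiv x₂ hx₂)
  calc p * (f m - f x₁) - q * (f x₂ - f m)
      ≤ p * (f' x₁ * (m - x₁)) + q * (f' x₂ * (m - x₂)) := by
        linarith [mul_le_mul_of_nonneg_left tangent₁ hp, mul_le_mul_of_nonneg_left tangent₂ hq]
    _ = (p * q / (p + q)) * (x₂ - x₁) * (f' x₁ - f' x₂) := by
        rw [hm]; field_simp; ring

theorem merge_error_deriv_bound (f f' : ℝ → ℝ)
    (x₁ x₂ : ℝ) (h0 : 0 ≤ x₁) (hle : x₁ ≤ x₂)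
    (hconc : ConcaveOn ℝ (Set.Icc x₁ x₂) f)
    (hderiv : ∀ x ∈ Set.Icc x₁ x₂, HasDerivAt f (f' x) x)
    (p q : ℝ) (hp : 0 ≤ p) (hq : 0 ≤ q) (hpq : 0 < p + q) :
    p * (f ((p * x₁ + q * x₂) / (p + q)) - f x₁) -
      q * (f x₂ - f ((p * x₁ + q * x₂) / (p + q))) ≤
    (p * q / (p + q)) * (x₂ - x₁) * (f' x₁ - f' x₂) :=
  merge_error_deriv_bound_general f f' x₁ x₂ hle hconc hderiv p q hp hq hpq
end

section
/- For all x ∈ [0, 1/2], the binary entropy satisfies h(x) ≤ 2√(x(1−x)), i.e., the binary entropy function is dominated by the Bhattacharyya function on [0, 1/2]. -/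
noncomputable def binEntropy (x : ℝ) : ℝ :=
  -x * Real.logb 2 x - (1 - x) * Real.logb 2 (1 - x)

/-! With natural logarithms the claim reads `g x ≥ 0` for
`g x = 2 log 2 · √(x(1-x)) - H x`, `H` the binary entropy in nats. Writing `s = √(x(1-x))`,
`g'' = (2s - log 2) / (2s³)`, so `g` is concave on `[0, t₀]` and convex on `[t₀, 1 - t₀]`, where
`4 t₀ (1 - t₀) = (log 2)²`. On the convex part the symmetry `g (1 - x) = g x` makes `g (1/2) = 0`
the minimum; on the concave part `g` lies above its chord from `g 0 = 0` to `g t₀ ≥ 0`. -/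

section

open Real Set

lemma hasDerivAt_sqrt_mul_one_sub {x : ℝ} (h₀ : 0 < x) (h₁ : x < 1) :
    HasDerivAt (fun y ↦ √(y * (1 - y))) ((1 - 2 * x) / (2 * √(x * (1 - x)))) x := by
  refine (((hasDerivAt_id' x).fun_mul ((hasDerivAt_id' x).const_sub 1)).sqrt
    (by nlinarith)).congr_deriv ?_
  ring

lemma hasDerivAt_one_sub_two_mul_div_sqrt_mul_one_sub {x : ℝ} (h₀ : 0 < x) (h₁ : x < 1) :
    HasDerivAt (fun y ↦ (1 - 2 * y) / √(y * (1 - y))) (-1 / (2 * √(x * (1 - x)) ^ 3)) x := by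
  have hs : 0 < √(x * (1 - x)) := sqrt_pos.2 (by nlinarith)
  have hs2 : √(x * (1 - x)) ^ 2 = x * (1 - x) := sq_sqrt (by nlinarith)
  refine ((((hasDerivAt_id' x).const_mul 2).const_sub 1).fun_div
    (hasDerivAt_sqrt_mul_one_sub h₀ h₁) hs.ne').congr_deriv ?_
  field_simp
  linear_combination (-4) * hs2

noncomputable def bhattacharyyaGap (x : ℝ) : ℝ :=
  2 * log 2 * √(x * (1 - x)) - Real.binEntropy x

noncomputable def bhattacharyyaGapDeriv (x : ℝ) : ℝ :=
  log 2 * ((1 - 2 * x) / √(x * (1 - x))) + log x - log (1 - x)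

lemma continuous_bhattacharyyaGap : Continuous bhattacharyyaGap := by
  unfold bhattacharyyaGap; fun_prop

lemma bhattacharyyaGap_one_sub (x : ℝ) : bhattacharyyaGap (1 - x) = bhattacharyyaGap x := by
  simp only [bhattacharyyaGap, binEntropy_one_sub, sub_sub_cancel, mul_comm (1 - x)]

lemma bhattacharyyaGap_zero : bhattacharyyaGap 0 = 0 := by
  simp [bhattacharyyaGap]

lemma bhattacharyyaGap_two_inv : bhattacharyyaGap 2⁻¹ = 0 := by
  have : √((2 : ℝ)⁻¹ * (1 - 2⁻¹)) = 2⁻¹ := by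
    rw [show (2 : ℝ)⁻¹ * (1 - 2⁻¹) = 2⁻¹ ^ 2 by norm_num, sqrt_sq (by norm_num)]
  simp only [bhattacharyyaGap, this, binEntropy_two_inv]
  ring

lemma hasDerivAt_bhattacharyyaGap {x : ℝ} (h₀ : 0 < x) (h₁ : x < 1) :
    HasDerivAt bhattacharyyaGap (bhattacharyyaGapDeriv x) x := by
  have hs : 0 < √(x * (1 - x)) := sqrt_pos.2 (by nlinarith)
  refine (((hasDerivAt_sqrt_mul_one_sub h₀ h₁).const_mul (2 * log 2)).sub
    (hasDerivAt_binEntropy h₀.ne' (by linarith))).congr_deriv ?_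
  unfold bhattacharyyaGapDeriv
  field_simp
  ring

lemma hasDerivAt_bhattacharyyaGapDeriv {x : ℝ} (h₀ : 0 < x) (h₁ : x < 1) :
    HasDerivAt bhattacharyyaGapDeriv
      ((2 * √(x * (1 - x)) - log 2) / (2 * √(x * (1 - x)) ^ 3)) x := by
  have hs : 0 < √(x * (1 - x)) := sqrt_pos.2 (by nlinarith)
  have hs2 : √(x * (1 - x)) ^ 2 = x * (1 - x) := sq_sqrt (by nlinarith)
  refine ((((hasDerivAt_one_sub_two_mul_div_sqrt_mul_one_sub h₀ h₁).const_mul (log 2)).add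
    (hasDerivAt_log h₀.ne')).sub ((hasDerivAt_log (by linarith)).comp x
      ((hasDerivAt_id' x).const_sub 1))).congr_deriv ?_
  have : 1 - x ≠ 0 := by linarith
  field_simp
  linear_combination (2 * √(x * (1 - x))) * hs2

noncomputable def bhattacharyyaGapInflection : ℝ := (1 - √(1 - log 2 ^ 2)) / 2

local notation "t₀" => bhattacharyyaGapInflection

lemma bhattacharyyaGapInflection_mem_Icc : t₀ ∈ Icc 0 2⁻¹ := by
  have h1 : √(1 - log 2 ^ 2) ≤ 1 := sqrt_le_one.2 (by nlinarith)
  unfold bhattacharyyaGapInflection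
  constructor <;> linarith [sqrt_nonneg (1 - log 2 ^ 2)]

lemma four_mul_mul_one_sub_sub_log_two_sq (x : ℝ) :
    4 * (x * (1 - x)) - log 2 ^ 2 = 4 * (x - t₀) * (1 - t₀ - x) := by
  have hL : log 2 < 1 := by linarith [log_lt_sub_one_of_pos two_pos (by norm_num)]
  have := sq_sqrt (show 0 ≤ 1 - log 2 ^ 2 by nlinarith [log_pos one_lt_two])
  unfold bhattacharyyaGapInflection
  linear_combination (-1) * this

lemma two_mul_sqrt_mul_one_sub_le_log_two {x : ℝ} (h₀ : 0 ≤ x) (h : x ≤ t₀) :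
    2 * √(x * (1 - x)) ≤ log 2 := by
  have ht := bhattacharyyaGapInflection_mem_Icc
  have hsq := sq_sqrt (show 0 ≤ x * (1 - x) by nlinarith [ht.2])
  nlinarith [four_mul_mul_one_sub_sub_log_two_sq x, log_pos one_lt_two, ht.2,
    sqrt_nonneg (x * (1 - x))]

lemma log_two_le_two_mul_sqrt_mul_one_sub {x : ℝ} (h : x ∈ Icc t₀ (1 - t₀)) :
    log 2 ≤ 2 * √(x * (1 - x)) := by
  have ht := bhattacharyyaGapInflection_mem_Icc
  have hsq := sq_sqrt (show 0 ≤ x * (1 - x) by nlinarith [ht.1, h.1, h.2])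
  nlinarith [four_mul_mul_one_sub_sub_log_two_sq x, log_pos one_lt_two, h.1, h.2,
    sqrt_nonneg (x * (1 - x))]

lemma concaveOn_bhattacharyyaGap : ConcaveOn ℝ (Icc 0 t₀) bhattacharyyaGap := by
  have ht := bhattacharyyaGapInflection_mem_Icc
  refine concaveOn_of_hasDerivWithinAt2_nonpos (convex_Icc _ _)
    continuous_bhattacharyyaGap.continuousOn (fun x hx ↦ ?_) (fun x hx ↦ ?_) (fun x hx ↦ ?_)
    (f' := bhattacharyyaGapDeriv)
    (f'' := fun x ↦ (2 * √(x * (1 - x)) - log 2) / (2 * √(x * (1 - x)) ^ 3))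
  all_goals
    rw [interior_Icc] at hx
    obtain ⟨h₀, h₁⟩ : 0 < x ∧ x < 1 := ⟨hx.1, by linarith [hx.2, ht.2]⟩
  · exact (hasDerivAt_bhattacharyyaGap h₀ h₁).hasDerivWithinAt
  · exact (hasDerivAt_bhattacharyyaGapDeriv h₀ h₁).hasDerivWithinAt
  · exact div_nonpos_of_nonpos_of_nonneg
      (by linarith [two_mul_sqrt_mul_one_sub_le_log_two h₀.le hx.2.le]) (by positivity)

lemma convexOn_bhattacharyyaGap : ConvexOn ℝ (Icc t₀ (1 - t₀)) bhattacharyyaGap := by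
  have ht := bhattacharyyaGapInflection_mem_Icc
  refine convexOn_of_hasDerivWithinAt2_nonneg (convex_Icc _ _)
    continuous_bhattacharyyaGap.continuousOn (fun x hx ↦ ?_) (fun x hx ↦ ?_) (fun x hx ↦ ?_)
    (f' := bhattacharyyaGapDeriv)
    (f'' := fun x ↦ (2 * √(x * (1 - x)) - log 2) / (2 * √(x * (1 - x)) ^ 3))
  all_goals
    rw [interior_Icc] at hx
    obtain ⟨h₀, h₁⟩ : 0 < x ∧ x < 1 := ⟨by linarith [hx.1, ht.1], by linarith [hx.2, ht.1]⟩
  · exact (hasDerivAt_bhattacharyyaGap h₀ h₁).hasDerivWithinAt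
  · exact (hasDerivAt_bhattacharyyaGapDeriv h₀ h₁).hasDerivWithinAt
  · exact div_nonneg
      (by linarith [log_two_le_two_mul_sqrt_mul_one_sub ⟨hx.1.le, hx.2.le⟩]) (by positivity)

lemma bhattacharyyaGap_nonneg_of_mem_Icc {x : ℝ} (hx : x ∈ Icc t₀ (1 - t₀)) :
    0 ≤ bhattacharyyaGap x := by
  have hx' : 1 - x ∈ Icc t₀ (1 - t₀) := ⟨by linarith [hx.2], by linarith [hx.1]⟩
  have := convexOn_bhattacharyyaGap.2 hx hx' (by norm_num : (0 : ℝ) ≤ 2⁻¹)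
    (by norm_num : (0 : ℝ) ≤ 2⁻¹) (by norm_num)
  simp only [smul_eq_mul, bhattacharyyaGap_one_sub] at this
  rw [show 2⁻¹ * x + 2⁻¹ * (1 - x) = (2⁻¹ : ℝ) by ring, bhattacharyyaGap_two_inv] at this
  linarith

lemma bhattacharyyaGap_nonneg {x : ℝ} (h₀ : 0 ≤ x) (h₁ : x ≤ 1) : 0 ≤ bhattacharyyaGap x := by
  wlog hx : x ≤ 2⁻¹ generalizing x
  · rw [← bhattacharyyaGap_one_sub]
    exact this (by linarith) (by linarith) (by linarith)
  have ht := bhattacharyyaGapInflection_mem_Icc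
  rcases le_total x t₀ with h | h
  · have h_t₀ := bhattacharyyaGap_nonneg_of_mem_Icc ⟨le_rfl, by linarith [ht.2]⟩
    calc 0 ≤ min (bhattacharyyaGap 0) (bhattacharyyaGap t₀) := by
          rw [bhattacharyyaGap_zero]; exact le_min le_rfl h_t₀
      _ ≤ bhattacharyyaGap x := concaveOn_bhattacharyyaGap.min_le_of_mem_Icc
          (left_mem_Icc.2 ht.1) (right_mem_Icc.2 ht.1) ⟨h₀, h⟩
  · exact bhattacharyyaGap_nonneg_of_mem_Icc ⟨h, by linarith [ht.2]⟩

end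

lemma binEntropy_eq_div_log_two (x : ℝ) : binEntropy x = Real.binEntropy x / Real.log 2 := by
  simp only [binEntropy, Real.binEntropy, Real.logb, Real.log_inv]
  ring

theorem binEntropy_le_bhattacharyya (x : ℝ) (hx : x ∈ Set.Icc (0:ℝ) (1/2)) :
    binEntropy x ≤ 2 * Real.sqrt (x * (1 - x)) := by
  have := bhattacharyyaGap_nonneg hx.1 (by linarith [hx.2])
  rw [binEntropy_eq_div_log_two, div_le_iff₀ (Real.log_pos one_lt_two)]
  unfold bhattacharyyaGap at this
  linarith
end
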